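/- Let d ≥ 2 be an integer and let α ∈ (−2/(d−1), 0). Set β = (2 − α(d+1))/(4d) and C₀ = (2^{(d−1)/2} κ_{d−1} / (d κ_d²))^{1/(2d)}, and for λ > 0 set u_λ = C₀ λ^β. Then for every fixed h ≥ 0, lim_{λ → ∞} φ_{λ,α,u_λ}(h) = h^{(d−1)/2}. -/

import Mathlib

/-!
For `h > 0` put `a = λ^α → 0` and `ε = h / u_λ² → 0`. Up to the clipping,
`g = a ε (1 - b/2) / (1 - ε)` with `b = (1 + a) h / (a u_λ²)`, and `b → 0` because
`α > -2/(d-1)` makes `λ^α u_λ² → ∞`; hence `g → 0⁺` with `g ~ a ε`. Near `0` the cap area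
behaves like `s₁(g) ~ 2^{(d-1)/2} κ_{d-1} / (d κ_d) · g^{(d-1)/2}` (L'Hôpital: the derivative
of `∫₀^{arccos(1-g)} sin^{d-2}` is `(g(2-g))^{(d-3)/2}`), and after substituting `g ~ a ε` all
powers of `λ` and `u_λ` cancel by the choice of `β` and `C₀`, leaving `h^{(d-1)/2}`.
For `h = 0`, `φ = 0`.
-/

open MeasureTheory Real Filter

/-- `kappa j` is the Lebesgue volume of the unit ball in `ℝ^j`. -/
noncomputable def kappa (j : ℕ) : ℝ :=
  (volume (Metric.ball (0 : EuclideanSpace ℝ (Fin j)) 1)).toReal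

/-- Normalized surface area `s₁` of a spherical cap of height `h` (equals `1` for `h > 2`). -/
noncomputable def s1 (d : ℕ) (h : ℝ) : ℝ :=
  if h ≤ 2 then
    (((d : ℝ) - 1) * kappa (d - 1) / ((d : ℝ) * kappa d)) *
      ∫ θ in (0:ℝ)..(Real.arccos (1 - h)), (Real.sin θ) ^ (d - 2)
  else 1

/-- The function `g_{λ,α,u}(h)`. -/
noncomputable def gfun (lam al u h : ℝ) : ℝ :=
  min (max ((lam ^ al / u ^ 2 * h - (1 / 2) * (1 + lam ^ al) / u ^ 4 * h ^ 2) /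
      (1 - h / u ^ 2)) 0) 2

/-- The density `φ_{λ,α,u}(h)`. -/
noncomputable def phi (d : ℕ) (lam al u h : ℝ) : ℝ :=
  lam * (1 + lam ^ al) ^ d / u ^ (d + 1) / (kappa d * lam ^ ((d : ℝ) * al)) *
    s1 d (gfun lam al u h) * (1 - h / u ^ 2) ^ (d - 1)

open Set Topology

theorem kappa_pos (j : ℕ) : 0 < kappa j :=
  ENNReal.toReal_pos (Metric.measure_ball_pos _ _ one_pos).ne' measure_ball_lt_top.ne

theorem hasDerivAt_integral_sin_pow_arccos_one_sub (n : ℕ) {g : ℝ}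
    (hg : g ∈ Ioo (0 : ℝ) 2) :
    HasDerivAt (fun g : ℝ => ∫ θ in (0 : ℝ)..arccos (1 - g), sin θ ^ n)
      ((g * (2 - g)) ^ (((n : ℝ) - 1) / 2)) g := by
  have hs : 0 < g * (2 - g) := mul_pos hg.1 (by linarith [hg.2])
  have harccos := (hasDerivAt_arccos (x := 1 - g) (by linarith [hg.2]) (by linarith [hg.1])).comp
    g ((hasDerivAt_id g).const_sub 1)
  have hcont : Continuous fun θ : ℝ => sin θ ^ n := by fun_prop
  have hint := intervalIntegral.integral_hasDerivAt_right
    (hcont.intervalIntegrable 0 (arccos (1 - g)))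
    hcont.stronglyMeasurable.stronglyMeasurableAtFilter hcont.continuousAt
  refine (hint.comp g harccos).congr_deriv ?_
  rw [sin_arccos, show 1 - (1 - g) ^ 2 = g * (2 - g) by ring, ← rpow_natCast,
    ← rpow_div_two_eq_sqrt _ hs.le, neg_mul_neg, mul_one, sqrt_eq_rpow, one_div,
    ← rpow_neg hs.le, ← rpow_add hs]
  ring_nf

theorem tendsto_integral_sin_pow_arccos_one_sub_div_rpow (n : ℕ) :
    Tendsto
      (fun g : ℝ => (∫ θ in (0 : ℝ)..arccos (1 - g), sin θ ^ n) / g ^ (((n : ℝ) + 1) / 2))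
      (𝓝[>] 0) (𝓝 (2 ^ (((n : ℝ) + 1) / 2) / ((n : ℝ) + 1))) := by
  have hq : 0 < ((n : ℝ) + 1) / 2 := by positivity
  have hmem : Ioo (0 : ℝ) 2 ∈ 𝓝[>] (0 : ℝ) := Ioo_mem_nhdsGT two_pos
  have hcont : Continuous fun g : ℝ => ∫ θ in (0 : ℝ)..arccos (1 - g), sin θ ^ n :=
    (intervalIntegral.continuous_primitive
        (fun a b => (continuous_sin.pow n).intervalIntegrable a b) 0).comp
      (continuous_arccos.comp (continuous_const.sub continuous_id))
  refine HasDerivAt.lhopital_zero_nhdsGT (f' := fun g => (g * (2 - g)) ^ (((n : ℝ) - 1) / 2))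
    (g' := fun g => ((n : ℝ) + 1) / 2 * g ^ (((n : ℝ) + 1) / 2 - 1)) ?_ ?_ ?_ ?_ ?_ ?_
  · filter_upwards [hmem] with g hg using hasDerivAt_integral_sin_pow_arccos_one_sub n hg
  · filter_upwards [hmem] with g hg using hasDerivAt_rpow_const (Or.inl hg.1.ne')
  · filter_upwards [hmem] with g hg using (mul_pos hq (rpow_pos_of_pos hg.1 _)).ne'
  · simpa using
      hcont.continuousAt.tendsto.mono_left (nhdsWithin_le_nhds (s := Ioi (0 : ℝ)) (a := 0))
  · simpa [zero_rpow hq.ne'] using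
      (continuousAt_rpow_const 0 _ (Or.inr hq.le)).tendsto.mono_left
        (nhdsWithin_le_nhds (s := Ioi (0 : ℝ)))
  · have hlim : Tendsto (fun g : ℝ => (2 - g) ^ (((n : ℝ) - 1) / 2) / (((n : ℝ) + 1) / 2))
        (𝓝[>] 0) (𝓝 (2 ^ (((n : ℝ) + 1) / 2) / ((n : ℝ) + 1))) := by
      have : ContinuousAt
          (fun g : ℝ => (2 - g) ^ (((n : ℝ) - 1) / 2) / (((n : ℝ) + 1) / 2)) 0 := by
        fun_prop (disch := norm_num)
      convert this.tendsto.mono_left nhdsWithin_le_nhds using 2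
      rw [show (2 : ℝ) ^ (((n : ℝ) + 1) / 2) = 2 ^ (((n : ℝ) - 1) / 2) * 2 by
        rw [← rpow_add_one two_ne_zero]; ring_nf]
      field_simp
      norm_num
    refine hlim.congr' ?_
    filter_upwards [hmem] with g hg
    rw [mul_rpow hg.1.le (by linarith [hg.2]),
      show ((n : ℝ) + 1) / 2 - 1 = ((n : ℝ) - 1) / 2 by ring]
    field_simp [(rpow_pos_of_pos hg.1 (((n : ℝ) - 1) / 2)).ne']

theorem tendsto_s1_div_rpow {d : ℕ} (hd : 2 ≤ d) :
    Tendsto (fun g => s1 d g / g ^ (((d : ℝ) - 1) / 2)) (𝓝[>] 0)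
      (𝓝 (2 ^ (((d : ℝ) - 1) / 2) * kappa (d - 1) / (d * kappa d))) := by
  have hcast : ((d - 2 : ℕ) : ℝ) + 1 = (d : ℝ) - 1 := by
    rw [Nat.cast_sub hd]; push_cast; ring
  have hd1 : (d : ℝ) - 1 ≠ 0 := by
    rw [← hcast]; positivity
  have hI := (tendsto_integral_sin_pow_arccos_one_sub_div_rpow (d - 2)).const_mul
    (((d : ℝ) - 1) * kappa (d - 1) / ((d : ℝ) * kappa d))
  rw [hcast] at hI
  convert hI.congr' ?_ using 2
  · field_simp
  · filter_upwards [Ioo_mem_nhdsGT two_pos] with g hg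
    rw [s1, if_pos hg.2.le, ← mul_div_assoc]

section gfun

variable {al h : ℝ} {u : ℝ → ℝ}

theorem tendsto_gfun_div (ha : Tendsto (fun lam : ℝ => lam ^ al) atTop (𝓝 0))
    (hu : Tendsto u atTop atTop) (hau : Tendsto (fun lam => lam ^ al * u lam ^ 2) atTop atTop)
    (hh : 0 < h) :
    Tendsto (fun lam => gfun lam al (u lam) h / (lam ^ al * (h / u lam ^ 2))) atTop (𝓝 1) := by
  have hε : Tendsto (fun lam => h / u lam ^ 2) atTop (𝓝 0) :=
    tendsto_const_nhds.div_atTop ((tendsto_pow_atTop two_ne_zero).comp hu)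
  have hb : Tendsto (fun lam => (1 + lam ^ al) * h / (lam ^ al * u lam ^ 2)) atTop (𝓝 0) :=
    ((ha.const_add 1).mul_const h).div_atTop hau
  set r := fun lam => (1 - (1 + lam ^ al) * h / (lam ^ al * u lam ^ 2) / 2) / (1 - h / u lam ^ 2)
  have hr : Tendsto r atTop (𝓝 1) := by
    have := ((hb.div_const 2).const_sub 1).div (hε.const_sub 1) (by norm_num)
    rwa [zero_div, sub_zero, div_one] at this
  have hg : Tendsto (fun lam => lam ^ al * (h / u lam ^ 2) * r lam) atTop (𝓝 0) := by
    simpa using (ha.mul hε).mul hr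
  refine hr.congr' ?_
  filter_upwards [eventually_gt_atTop 0, hu.eventually_gt_atTop 0, hr.eventually_const_lt one_pos,
    hg.eventually_le_const two_pos] with lam hlam hul hr0 hg2
  have hraw : (lam ^ al / u lam ^ 2 * h - 1 / 2 * (1 + lam ^ al) / u lam ^ 4 * h ^ 2) /
      (1 - h / u lam ^ 2) = lam ^ al * (h / u lam ^ 2) * r lam := by
    have := (rpow_pos_of_pos hlam al).ne'
    simp only [r]
    field_simp
  have : 0 < lam ^ al * (h / u lam ^ 2) := by positivity
  rw [gfun, hraw, max_eq_left (by positivity), min_eq_left hg2, mul_div_cancel_left₀ _ this.ne']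

theorem tendsto_gfun_nhdsGT (ha : Tendsto (fun lam : ℝ => lam ^ al) atTop (𝓝 0))
    (hu : Tendsto u atTop atTop) (hau : Tendsto (fun lam => lam ^ al * u lam ^ 2) atTop atTop)
    (hh : 0 < h) :
    Tendsto (fun lam => gfun lam al (u lam) h) atTop (𝓝[>] 0) := by
  have hscale : Tendsto (fun lam => lam ^ al * (h / u lam ^ 2)) atTop (𝓝 0) := by
    simpa using ha.mul (tendsto_const_nhds.div_atTop ((tendsto_pow_atTop two_ne_zero).comp hu))
  have hratio := tendsto_gfun_div ha hu hau hh
  have heq : (fun lam => gfun lam al (u lam) h / (lam ^ al * (h / u lam ^ 2)) *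
      (lam ^ al * (h / u lam ^ 2))) =ᶠ[atTop] fun lam => gfun lam al (u lam) h := by
    filter_upwards [eventually_gt_atTop 0, hu.eventually_gt_atTop 0] with lam hlam hul
    exact div_mul_cancel₀ _ (by positivity)
  refine tendsto_nhdsWithin_iff.2 ⟨by simpa using (hratio.mul hscale).congr' heq, ?_⟩
  filter_upwards [heq, eventually_gt_atTop 0, hu.eventually_gt_atTop 0,
    hratio.eventually_const_lt one_pos] with lam heq hlam hul hpos
  rw [← heq]
  exact mul_pos hpos (by positivity)

end gfun

theorem phi_eq_mul (d : ℕ) {lam al u h p : ℝ} (hlam : 0 < lam) (hu : 0 < u) (hh : 0 < h)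
    (hg : 0 < gfun lam al u h) :
    phi d lam al u h =
      s1 d (gfun lam al u h) / gfun lam al u h ^ p *
        (gfun lam al u h / (lam ^ al * (h / u ^ 2))) ^ p *
        ((1 + lam ^ al) ^ d * (1 - h / u ^ 2) ^ (d - 1)) *
        (lam * (lam ^ al * (h / u ^ 2)) ^ p /
          (u ^ (d + 1) * (kappa d * lam ^ ((d : ℝ) * al)))) := by
  have := kappa_pos d
  have := rpow_pos_of_pos hg p
  have := rpow_pos_of_pos (show 0 < lam ^ al * (h / u ^ 2) by positivity) p
  rw [phi, div_rpow hg.le (by positivity)]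
  field_simp

/-- `scaleConst d` is the paper's `C₀` and `uScale d al lam` its `u_λ = C₀ λ^β`. -/
noncomputable def scaleConst (d : ℕ) : ℝ :=
  ((2 : ℝ) ^ (((d : ℝ) - 1) / 2) * kappa (d - 1) / ((d : ℝ) * kappa d ^ 2)) ^
    ((1 : ℝ) / (2 * (d : ℝ)))

noncomputable def uScale (d : ℕ) (al lam : ℝ) : ℝ :=
  scaleConst d * lam ^ ((2 - al * ((d : ℝ) + 1)) / (4 * (d : ℝ)))

section uScale

variable {d : ℕ} {al lam : ℝ}

theorem scaleConst_pos (hd : 0 < d) : 0 < scaleConst d := by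
  have := kappa_pos d
  have := kappa_pos (d - 1)
  unfold scaleConst
  positivity

theorem uScale_pow_two_mul (hd : 0 < d) (hlam : 0 < lam) :
    uScale d al lam ^ (2 * d) =
      (2 : ℝ) ^ (((d : ℝ) - 1) / 2) * kappa (d - 1) / ((d : ℝ) * kappa d ^ 2) *
        lam ^ (1 - al * ((d : ℝ) + 1) / 2) := by
  have := kappa_pos d
  have := kappa_pos (d - 1)
  have hd' : (d : ℝ) ≠ 0 := by positivity
  rw [uScale, scaleConst, mul_pow, ← rpow_natCast, ← rpow_natCast (lam ^ _),
    ← rpow_mul (by positivity), ← rpow_mul hlam.le]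
  push_cast
  congr 1
  · rw [show 1 / (2 * (d : ℝ)) * (2 * d) = 1 by field_simp, rpow_one]
  · congr 1
    field_simp
    ring

theorem tendsto_uScale_atTop (hd : 0 < d) (hal : al < 0) :
    Tendsto (uScale d al) atTop atTop := by
  have : al * ((d : ℝ) + 1) < 0 := mul_neg_of_neg_of_pos hal (by positivity)
  have hexp : 0 < (2 - al * ((d : ℝ) + 1)) / (4 * (d : ℝ)) :=
    div_pos (by linarith) (by positivity)
  exact (tendsto_rpow_atTop hexp).const_mul_atTop (scaleConst_pos hd)

theorem tendsto_rpow_mul_uScale_sq_atTop (hd : 2 ≤ d) (hal : -2 / ((d : ℝ) - 1) < al) :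
    Tendsto (fun lam => lam ^ al * uScale d al lam ^ 2) atTop atTop := by
  have hd1 : (0 : ℝ) < (d : ℝ) - 1 := by
    have : (2 : ℝ) ≤ d := by exact_mod_cast hd
    linarith
  have hexp : 0 < al + 2 * ((2 - al * ((d : ℝ) + 1)) / (4 * (d : ℝ))) := by
    have := (div_lt_iff₀ hd1).1 hal
    rw [show al + 2 * ((2 - al * ((d : ℝ) + 1)) / (4 * (d : ℝ))) =
        (al * ((d : ℝ) - 1) + 2) / (2 * d) by field_simp; ring]
    apply div_pos <;> linarith
  refine ((tendsto_rpow_atTop hexp).const_mul_atTop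
    (pow_pos (scaleConst_pos (d := d) (by omega)) 2)).congr' ?_
  filter_upwards [eventually_gt_atTop 0] with lam hlam
  rw [uScale, mul_pow, ← rpow_natCast (lam ^ _) 2, ← rpow_mul hlam.le, rpow_add hlam]
  push_cast
  ring_nf

/-- `β` and `C₀` are chosen exactly so that this does not depend on `λ`. -/
theorem mul_rpow_div_uScale_pow_eq (hd : 1 ≤ d) (hlam : 0 < lam) {h : ℝ} (hh : 0 ≤ h) :
    lam * (lam ^ al * (h / uScale d al lam ^ 2)) ^ (((d : ℝ) - 1) / 2) /
        (uScale d al lam ^ (d + 1) * (kappa d * lam ^ ((d : ℝ) * al))) =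
      h ^ (((d : ℝ) - 1) / 2) * d * kappa d / (2 ^ (((d : ℝ) - 1) / 2) * kappa (d - 1)) := by
  set u := uScale d al lam
  have hu : 0 < u := mul_pos (scaleConst_pos (by omega)) (rpow_pos_of_pos hlam _)
  have hd1 : ((d - 1 : ℕ) : ℝ) = (d : ℝ) - 1 := by rw [Nat.cast_sub hd, Nat.cast_one]
  have hpow : (lam ^ al * (h / u ^ 2)) ^ (((d : ℝ) - 1) / 2) =
      lam ^ (al * (((d : ℝ) - 1) / 2)) * h ^ (((d : ℝ) - 1) / 2) / u ^ (d - 1) := by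
    rw [mul_rpow (by positivity) (by positivity), div_rpow hh (by positivity), ← rpow_mul hlam.le,
      ← rpow_natCast _ 2, ← rpow_mul hu.le, ← rpow_natCast _ (d - 1), hd1, mul_div_assoc]
    ring_nf
  have hlam_pow : lam * lam ^ (al * (((d : ℝ) - 1) / 2)) / lam ^ ((d : ℝ) * al) =
      lam ^ (1 - al * ((d : ℝ) + 1) / 2) := by
    rw [show 1 - al * ((d : ℝ) + 1) / 2 = 1 + al * (((d : ℝ) - 1) / 2) - d * al by ring,
      rpow_sub hlam, rpow_add hlam, rpow_one]
  have hu_pow : u ^ (d + 1) * u ^ (d - 1) = u ^ (2 * d) := by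
    rw [← pow_add]; congr 1; omega
  have := kappa_pos d
  have := kappa_pos (d - 1)
  have := rpow_pos_of_pos hlam (1 - al * ((d : ℝ) + 1) / 2)
  calc lam * (lam ^ al * (h / u ^ 2)) ^ (((d : ℝ) - 1) / 2) /
        (u ^ (d + 1) * (kappa d * lam ^ ((d : ℝ) * al)))
      = lam * lam ^ (al * (((d : ℝ) - 1) / 2)) / lam ^ ((d : ℝ) * al) *
          h ^ (((d : ℝ) - 1) / 2) / ((u ^ (d + 1) * u ^ (d - 1)) * kappa d) := by
        rw [hpow]; field_simp
    _ = _ := by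
        rw [hlam_pow, hu_pow, uScale_pow_two_mul (by omega) hlam]
        field_simp

end uScale

/-- for `α ∈ (-2/(d-1), 0)`, `β = (2-α(d+1))/(4d)`,
`C₀ = (2^{(d-1)/2} κ_{d-1}/(d κ_d²))^{1/(2d)}` and `u_λ = C₀ λ^β`,
`φ_{λ,α,u_λ}(h) → h^{(d-1)/2}` for every fixed `h ≥ 0`. -/
theorem phi_limit_neg_subcritical (d : ℕ) (hd : 2 ≤ d) (al : ℝ)
    (hal0 : -2 / ((d : ℝ) - 1) < al) (hal1 : al < 0) (h : ℝ) (hh : 0 ≤ h) :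
    Tendsto (fun lam : ℝ =>
        phi d lam al
          (((2 : ℝ) ^ (((d : ℝ) - 1) / 2) * kappa (d - 1) / ((d : ℝ) * kappa d ^ 2)) ^
              ((1 : ℝ) / (2 * (d : ℝ))) *
            lam ^ ((2 - al * ((d : ℝ) + 1)) / (4 * (d : ℝ)))) h)
      atTop (nhds (h ^ (((d : ℝ) - 1) / 2))) := by
  change Tendsto (fun lam => phi d lam al (uScale d al lam) h) atTop _
  have hp : 0 < ((d : ℝ) - 1) / 2 := by
    have : (2 : ℝ) ≤ d := by exact_mod_cast hd
    linarith
  rcases hh.eq_or_lt with rfl | hh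
  · simp [phi, gfun, s1, zero_rpow hp.ne']
  have ha : Tendsto (fun lam : ℝ => lam ^ al) atTop (𝓝 0) := by
    simpa using tendsto_rpow_neg_atTop (neg_pos.2 hal1)
  have hu := tendsto_uScale_atTop (d := d) (by omega) hal1
  have hau := tendsto_rpow_mul_uScale_sq_atTop hd hal0
  have hg := tendsto_gfun_nhdsGT ha hu hau hh
  have hε : Tendsto (fun lam => h / uScale d al lam ^ 2) atTop (𝓝 0) :=
    tendsto_const_nhds.div_atTop ((tendsto_pow_atTop two_ne_zero).comp hu)
  have hlim := ((((tendsto_s1_div_rpow hd).comp hg).mul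
    ((tendsto_gfun_div ha hu hau hh).rpow_const (p := ((d : ℝ) - 1) / 2)
      (Or.inl one_ne_zero))).mul
    (((ha.const_add 1).pow d).mul ((hε.const_sub 1).pow (d - 1)))).mul_const
    (h ^ (((d : ℝ) - 1) / 2) * d * kappa d / (2 ^ (((d : ℝ) - 1) / 2) * kappa (d - 1)))
  convert hlim.congr' ?_ using 2
  · have := kappa_pos d
    have := kappa_pos (d - 1)
    field_simp
    simp
  · filter_upwards [eventually_gt_atTop 0, hu.eventually_gt_atTop 0,
      hg.eventually self_mem_nhdsWithin] with lam hlam hul hgpos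
    rw [phi_eq_mul d hlam hul hh hgpos, mul_rpow_div_uScale_pow_eq (by omega) hlam hh.le]
    rfl
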